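/- Let μ be a non-atomic Borel probability measure whose topological support is exactly F, where F is a fractal subset of [0,1] satisfying the lacunarity condition with constant λ ∈ (0,1], and let a ≥ 2/λ and q ∈ ℝ. Then β(q) = inf{ β ∈ ℝ : Σ_{n=1}^∞ μ(Ī_n^a)^q |I_n|^β < ∞ }, where β(q) := inf{ β ∈ ℝ : limsup_{r→0⁺} r^β Σ_{B ∈ B_r^*} μ(B̄^a)^q = 0 }. -/

import Mathlib

open MeasureTheory Filter Set
open scoped Classical

noncomputable section

/-- The enlargement `B̄^a` of the interval `[s,t]` by the factor `1+a` about its centre. -/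
def enlarge (a s t : ℝ) : Set ℝ :=
  Set.Icc (s - a * (t - s) / 2) (t + a * (t - s) / 2)

/-- The moment sum `Σ_{B ∈ B_r^*} μ(B̄^a)^q` over grid intervals of length `r`
whose interior meets the support of `μ` (i.e. with `μ(B) > 0`). -/
def gridSum (μ : Measure ℝ) (a q R : ℝ) : ℝ :=
  ∑' m : ℤ, if 0 < μ (Set.Icc ((m : ℝ) * R) (((m : ℝ) + 1) * R))
    then (μ (enlarge a ((m : ℝ) * R) (((m : ℝ) + 1) * R))).toReal ^ q else 0

/-- The coarse multifractal moment function
`β_a(q) = inf{β : limsup_{r→0⁺} r^β Σ_{B ∈ B_r^*} μ(B̄^a)^q = 0}`.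
(For the nonnegative quantity `r^β · Σ…`, vanishing of the `limsup` as `r → 0⁺`
is the same as convergence to `0`.) -/
def betaA (μ : Measure ℝ) (a q : ℝ) : ℝ :=
  sInf {β : ℝ | Filter.Tendsto (fun R => R ^ β * gridSum μ a q R)
    (nhdsWithin 0 (Set.Ioi 0)) (nhds 0)}

/-- `F` is a "fractal subset" of `[0,1]`: compact, Lebesgue-null, containing `0` and `1`. -/
def IsFractalSubset (F : Set ℝ) : Prop :=
  IsCompact F ∧ F ⊆ Set.Icc 0 1 ∧ (0 : ℝ) ∈ F ∧ (1 : ℝ) ∈ F ∧ MeasureTheory.volume F = 0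

/-- The complementary intervals `I_n = (l n, r n)` of `F` in `[0,1]`, enumerated with
nonincreasing lengths. -/
structure FractalComplement (F : Set ℝ) where
  l : ℕ → ℝ
  r : ℕ → ℝ
  lt : ∀ n, l n < r n
  disj : Pairwise fun n m => Disjoint (Set.Ioo (l n) (r n)) (Set.Ioo (l m) (r m))
  union : (⋃ n, Set.Ioo (l n) (r n)) = Set.Icc (0 : ℝ) 1 \ F
  mono : ∀ n, r (n + 1) - l (n + 1) ≤ r n - l n

/-- The length `|I_n|` of the `n`-th complementary interval. -/
def FractalComplement.len {F : Set ℝ} (c : FractalComplement F) (n : ℕ) : ℝ := c.r n - c.l n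

/-- The enlargement `Ī_n^a` of the closure of the complementary interval `I_n`. -/
def FractalComplement.I {F : Set ℝ} (c : FractalComplement F) (a : ℝ) (n : ℕ) : Set ℝ :=
  enlarge a (c.l n) (c.r n)

/-- The lacunarity condition with constant `lam`: every interval `[x-r, x+r]` with `x ∈ F`
and `0 < r ≤ 1` contains a complementary interval of length at least `lam * r`. -/
def Lacunary {F : Set ℝ} (c : FractalComplement F) (lam : ℝ) : Prop :=
  ∀ x ∈ F, ∀ R : ℝ, 0 < R → R ≤ 1 → ∃ n,
    Set.Ioo (c.l n) (c.r n) ⊆ Set.Icc (x - R) (x + R) ∧ lam * R ≤ c.len n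

/-- The topological support of `μ` is exactly `F`. -/
def HasSupport (μ : Measure ℝ) (F : Set ℝ) : Prop :=
  μ Fᶜ = 0 ∧ ∀ x ∈ F, ∀ ε : ℝ, 0 < ε → 0 < μ (Set.Ioo (x - ε) (x + ε))

/-!
Grid boxes and complementary intervals of comparable size are traded against each other.
Lacunarity puts, within distance `κ r` of any point of `F`, a complementary interval `I_n` with
`|I_n| ≍ r`; conversely the left endpoint of every `I_n` lies in `F = supp μ`, so a grid box of
dyadic size `r ≍ |I_n|` next to it has positive mass. In both cases one of `B̄^a`, `Ī_n^a`
contains the other (for the first, `a ≥ 2/λ` is what makes room), in the direction that compares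
`μ(·)^q` correctly for the sign of `q`, and each box or interval is used boundedly often, being
disjoint from the others and of comparable length. Hence
`Σ_{B ∈ B_r^*} μ(B̄^a)^q ≲ r^{-β} Σ_n μ(Ī_n^a)^q |I_n|^β`, while the intervals with
`|I_n| ≍ 2^{-k}` contribute `≲ 2^{-kβ} Σ_{B ∈ B_{2^{-k}}^*} μ(B̄^a)^q`. So each of the two sets
of exponents contains the other shifted by any `ε > 0`; pigeonholing the mass among the `≲ 1/r`
boxes of `B_r^*` bounds the first set from below, and the two infima agree.
-/

open Topology

lemma le_and_le_of_Ioo_subset_Icc {s t A B : ℝ} (hst : s < t) (h : Ioo s t ⊆ Icc A B) :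
    A ≤ s ∧ t ≤ B :=
  (Icc_subset_Icc_iff hst.le).mp (closure_Ioo hst.ne ▸ closure_minimal h isClosed_Icc)

lemma Icc_subset_enlarge {a s t : ℝ} (ha : 0 ≤ a) (hst : s ≤ t) : Icc s t ⊆ enlarge a s t :=
  Icc_subset_Icc (by nlinarith) (by nlinarith)

lemma exists_half_pow_mem_Icc {u : ℝ} (hu : 0 < u) (hu1 : u ≤ 1) :
    ∃ k : ℕ, u ≤ (1 / 2 : ℝ) ^ k ∧ (1 / 2 : ℝ) ^ k ≤ 2 * u := by
  obtain ⟨k, hlt, hle⟩ := exists_nat_pow_near_of_lt_one hu hu1 (by norm_num : (0 : ℝ) < 1 / 2)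
    (by norm_num)
  refine ⟨k, hle, ?_⟩
  rw [pow_succ] at hlt
  linarith

lemma rpow_le_add_mul_rpow {x R c₁ c₂ γ : ℝ} (hR : 0 < R) (hc₁ : 0 < c₁)
    (h₁ : c₁ * R ≤ x) (h₂ : x ≤ c₂ * R) : x ^ γ ≤ (c₁ ^ γ + c₂ ^ γ) * R ^ γ := by
  have hc₂ : 0 < c₂ := pos_of_mul_pos_left ((mul_pos hc₁ hR).trans_le (h₁.trans h₂)) hR.le
  have hx : 0 < x := (mul_pos hc₁ hR).trans_le h₁
  rw [add_mul, ← Real.mul_rpow hc₁.le hR.le, ← Real.mul_rpow hc₂.le hR.le]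
  rcases le_total 0 γ with hγ | hγ
  · linarith [Real.rpow_le_rpow hx.le h₂ hγ, Real.rpow_nonneg (mul_pos hc₁ hR).le γ]
  · linarith [Real.rpow_le_rpow_of_nonpos (mul_pos hc₁ hR) h₁ hγ,
      Real.rpow_nonneg (mul_pos hc₂ hR).le γ]

lemma card_mul_le_of_pairwiseDisjoint_Ioo {ι : Type*} {t : Finset ι} {f g : ι → ℝ} {δ A B : ℝ}
    (hdisj : (t : Set ι).PairwiseDisjoint fun i => Ioo (f i) (g i))
    (hδ : 0 ≤ δ) (hlen : ∀ i ∈ t, δ ≤ g i - f i) (hsub : ∀ i ∈ t, Ioo (f i) (g i) ⊆ Icc A B)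
    (hAB : A ≤ B) :
    (t.card : ℝ) * δ ≤ B - A := by
  have hvol : ∑ i ∈ t, volume (Ioo (f i) (g i)) ≤ volume (Icc A B) := by
    rw [← measure_biUnion_finset hdisj fun i _ => measurableSet_Ioo]
    exact measure_mono (iUnion₂_subset hsub)
  simp only [Real.volume_Ioo, Real.volume_Icc] at hvol
  rw [← ENNReal.ofReal_sum_of_nonneg fun i hi => ?_, ENNReal.ofReal_le_ofReal_iff (by linarith)]
    at hvol
  · calc (t.card : ℝ) * δ = ∑ _i ∈ t, δ := by rw [Finset.sum_const, nsmul_eq_mul]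
      _ ≤ ∑ i ∈ t, (g i - f i) := Finset.sum_le_sum hlen
      _ ≤ B - A := hvol
  · linarith [hlen i hi]

lemma sum_le_mul_sum_image_of_card_fiber_le {ι κ : Type*} [DecidableEq κ] {s : Finset ι}
    {φ : ι → κ} {f : ι → ℝ} {g : κ → ℝ} {K : ℝ} (hg : ∀ j ∈ s.image φ, 0 ≤ g j)
    (hfg : ∀ i ∈ s, f i ≤ g (φ i)) (hK : ∀ j ∈ s.image φ, ((s.filter (φ · = j)).card : ℝ) ≤ K) :
    ∑ i ∈ s, f i ≤ K * ∑ j ∈ s.image φ, g j := by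
  calc ∑ i ∈ s, f i ≤ ∑ i ∈ s, g (φ i) := Finset.sum_le_sum hfg
    _ = ∑ j ∈ s.image φ, (s.filter (φ · = j)).card • g j := Finset.sum_comp g φ
    _ ≤ ∑ j ∈ s.image φ, K * g j := Finset.sum_le_sum fun j hj => by
        rw [nsmul_eq_mul]; exact mul_le_mul_of_nonneg_right (hK j hj) (hg j hj)
    _ = K * ∑ j ∈ s.image φ, g j := (Finset.mul_sum _ _ _).symm

lemma sInf_eq_sInf_of_forall_add_mem {S T : Set ℝ} (hS : BddBelow S)
    (hST : ∀ β ∈ S, ∀ ε > 0, β + ε ∈ T) (hTS : ∀ β ∈ T, ∀ ε > 0, β + ε ∈ S) :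
    sInf S = sInf T := by
  rcases S.eq_empty_or_nonempty with rfl | ⟨β₀, hβ₀⟩
  · have hT : T = ∅ := eq_empty_of_forall_notMem fun β hβ => hTS β hβ 1 one_pos
    rw [hT]
  have hT : BddBelow T := by
    obtain ⟨b, hb⟩ := hS
    exact ⟨b - 1, fun β hβ => by linarith [hb (hTS β hβ 1 one_pos)]⟩
  refine le_antisymm (le_csInf ⟨_, hST β₀ hβ₀ 1 one_pos⟩ fun β hβ => ?_)
    (le_csInf ⟨β₀, hβ₀⟩ fun β hβ => ?_) <;>
  refine le_of_forall_pos_le_add fun ε hε => csInf_le ?_ ?_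
  exacts [hS, hTS β hβ ε hε, hT, hST β hβ ε hε]

lemma tendsto_rpow_add_mul_of_le_mul_rpow_neg {g : ℝ → ℝ} {β ε C : ℝ} (hε : 0 < ε)
    (hg : ∀ᶠ R in 𝓝[>] 0, 0 ≤ g R ∧ g R ≤ C * R ^ (-β)) :
    Tendsto (fun R => R ^ (β + ε) * g R) (𝓝[>] 0) (𝓝 0) := by
  have hlim : Tendsto (fun R : ℝ => C * R ^ ε) (𝓝[>] 0) (𝓝 0) := by
    have := ((Real.continuousAt_rpow_const 0 ε (.inr hε.le)).tendsto.mono_left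
      (nhdsWithin_le_nhds (s := Ioi 0))).const_mul C
    rwa [Real.zero_rpow hε.ne', mul_zero] at this
  refine squeeze_zero' ?_ ?_ hlim
  · filter_upwards [hg, self_mem_nhdsWithin] with R hR hR0
    exact mul_nonneg (Real.rpow_nonneg (le_of_lt hR0) _) hR.1
  · filter_upwards [hg, self_mem_nhdsWithin] with R hR hR0
    calc R ^ (β + ε) * g R ≤ R ^ (β + ε) * (C * R ^ (-β)) :=
          mul_le_mul_of_nonneg_left hR.2 (Real.rpow_nonneg (le_of_lt hR0) _)
      _ = C * R ^ ε := by
          rw [mul_left_comm, ← Real.rpow_add hR0]; ring_nf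

lemma summable_of_sum_fiber_le {f : ℕ → ℝ} (hf : ∀ n, 0 ≤ f n) {N : ℕ} (kf : ℕ → ℕ)
    {g : ℕ → ℝ} (hg : Summable g)
    (hfiber : ∀ (u : Finset ℕ) (k : ℕ), (∀ n ∈ u, N ≤ n ∧ kf n = k) → ∑ n ∈ u, f n ≤ g k) :
    Summable f := by
  have hg0 : ∀ k, 0 ≤ g k := fun k => by simpa using hfiber ∅ k (by simp)
  refine summable_of_sum_le hf (c := ∑ n ∈ Finset.range N, f n + ∑' k, g k) fun u => ?_
  rw [← Finset.sum_filter_not_add_sum_filter u (N ≤ ·),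
    ← Finset.sum_fiberwise_of_maps_to (s := u.filter (N ≤ ·)) (g := kf)
      (fun n hn => Finset.mem_image_of_mem kf hn)]
  gcongr ?_ + ?_
  · exact Finset.sum_le_sum_of_subset_of_nonneg (fun n hn => Finset.mem_range.mpr
      (not_le.mp (Finset.mem_filter.mp hn).2)) fun n _ _ => hf n
  · refine (Finset.sum_le_sum fun k _ => hfiber _ k fun n hn => ?_).trans
      (hg.sum_le_tsum _ fun k _ => hg0 k)
    simp only [Finset.mem_filter] at hn
    exact ⟨hn.1.2, hn.2⟩

lemma measure_toReal_rpow_le_of_subset {α : Type*} [MeasurableSpace α] {μ : Measure α}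
    [IsFiniteMeasure μ] {s t : Set α} {q : ℝ} (hq : 0 ≤ q) (h : s ⊆ t) :
    (μ s).toReal ^ q ≤ (μ t).toReal ^ q :=
  Real.rpow_le_rpow ENNReal.toReal_nonneg (measureReal_mono h) hq

lemma measure_toReal_rpow_le_of_superset {α : Type*} [MeasurableSpace α] {μ : Measure α}
    [IsFiniteMeasure μ] {s t : Set α} {q : ℝ} (hq : q ≤ 0) (h : t ⊆ s) (ht : 0 < μ t) :
    (μ s).toReal ^ q ≤ (μ t).toReal ^ q :=
  Real.rpow_le_rpow_of_nonpos (ENNReal.toReal_pos ht.ne' (measure_ne_top μ t))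
    (measureReal_mono h) hq

lemma nonempty_inter_of_measure_compl_eq_zero {α : Type*} [MeasurableSpace α] {μ : Measure α}
    {s t : Set α} (ht : μ tᶜ = 0) (hs : 0 < μ s) : (s ∩ t).Nonempty :=
  nonempty_of_measure_ne_zero (μ := μ) ((measure_inter_conull ht).symm ▸ hs.ne')

lemma HasSupport.measure_compl_Icc {μ : Measure ℝ} {F : Set ℝ} (hsupp : HasSupport μ F)
    (hF : F ⊆ Icc 0 1) : μ (Icc 0 1)ᶜ = 0 :=
  measure_mono_null (compl_subset_compl.mpr hF) hsupp.1

namespace FractalComplement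

variable {F : Set ℝ} (c : FractalComplement F)

lemma len_pos (n : ℕ) : 0 < c.len n := sub_pos.mpr (c.lt n)

lemma l_add_len (n : ℕ) : c.l n + c.len n = c.r n := add_sub_cancel _ _

lemma I_eq (a : ℝ) (n : ℕ) :
    c.I a n = Icc (c.l n - a * c.len n / 2) (c.r n + a * c.len n / 2) := rfl

lemma Ioo_subset (n : ℕ) : Ioo (c.l n) (c.r n) ⊆ Icc 0 1 \ F :=
  c.union ▸ subset_iUnion (fun n => Ioo (c.l n) (c.r n)) n

lemma l_mem (n : ℕ) : c.l n ∈ F := by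
  have hcl : c.l n ∈ closure (Ioo (c.l n) (c.r n)) := by
    rw [closure_Ioo (c.lt n).ne]; exact left_mem_Icc.mpr (c.lt n).le
  have h01 : c.l n ∈ Icc (0 : ℝ) 1 :=
    closure_minimal ((c.Ioo_subset n).trans sdiff_subset) isClosed_Icc hcl
  by_contra hF
  obtain ⟨m, hm⟩ := mem_iUnion.mp (c.union ▸ ⟨h01, hF⟩ : c.l n ∈ ⋃ m, Ioo (c.l m) (c.r m))
  have hmn : m ≠ n := by rintro rfl; exact lt_irrefl _ hm.1
  exact (c.disj hmn).inter_eq ▸ mem_closure_iff.mp hcl _ isOpen_Ioo hm |>.ne_empty rfl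

lemma tendsto_len_atTop : Tendsto c.len atTop (𝓝 0) := by
  have hvol : volume (⋃ n, Ioo (c.l n) (c.r n)) ≠ ⊤ := by
    rw [c.union]
    exact ne_top_of_le_ne_top (by simp) (measure_mono (μ := volume) sdiff_subset)
  rw [measure_iUnion c.disj fun _ => measurableSet_Ioo] at hvol
  refine (ENNReal.summable_toReal hvol).tendsto_atTop_zero.congr fun n => ?_
  exact (congrArg ENNReal.toReal Real.volume_Ioo).trans (ENNReal.toReal_ofReal (c.len_pos n).le)

lemma measure_I_pos {μ : Measure ℝ} (hsupp : HasSupport μ F) {a : ℝ} (ha : 0 < a) (n : ℕ) :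
    0 < μ (c.I a n) := by
  have hlen := c.len_pos n
  refine (hsupp.2 _ (c.l_mem n) _ (by positivity : 0 < a * c.len n / 2)).trans_le
    (measure_mono ?_)
  rw [I_eq]
  exact Ioo_subset_Icc_self.trans (Icc_subset_Icc (by linarith) (by linarith [c.l_add_len n]))

end FractalComplement

def gridBox (R : ℝ) (m : ℤ) : Set ℝ := Icc (m * R) ((m + 1) * R)

lemma enlarge_gridBox (a R : ℝ) (m : ℤ) :
    enlarge a (m * R) ((m + 1) * R) = Icc (m * R - a * R / 2) ((m + 1) * R + a * R / 2) := by
  rw [enlarge, add_mul, one_mul, add_sub_cancel_left]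

lemma gridBox_subset_enlarge {a R : ℝ} (ha : 0 ≤ a) (hR : 0 ≤ R) (m : ℤ) :
    gridBox R m ⊆ enlarge a (m * R) ((m + 1) * R) :=
  Icc_subset_enlarge ha (by nlinarith)

lemma mem_gridBox_floor {R : ℝ} (hR : 0 < R) (y : ℝ) : y ∈ gridBox R ⌊y / R⌋ := by
  have h₁ := Int.floor_le (y / R)
  have h₂ := Int.lt_floor_add_one (y / R)
  constructor
  · calc (⌊y / R⌋ : ℝ) * R ≤ y / R * R := by gcongr
      _ = y := div_mul_cancel₀ y hR.ne'
  · calc y = y / R * R := (div_mul_cancel₀ y hR.ne').symm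
      _ ≤ (⌊y / R⌋ + 1) * R := by gcongr

lemma card_mul_le_of_gridBox_subset {t : Finset ℤ} {R A B : ℝ} (hR : 0 < R) (hAB : A ≤ B)
    (h : ∀ m ∈ t, gridBox R m ⊆ Icc A B) : (t.card : ℝ) * R ≤ B - A := by
  refine card_mul_le_of_pairwiseDisjoint_Ioo (fun i _ j _ hij => ?_) hR.le
    (fun m _ => by rw [add_mul, one_mul, add_sub_cancel_left])
    (fun m hm => Ioo_subset_Icc_self.trans (h m hm)) hAB
  rcases hij.lt_or_gt with hlt | hlt <;> [skip; apply Disjoint.symm] <;>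
  refine (Ioc_disjoint_Ioc_of_le (mul_le_mul_of_nonneg_right ?_ hR.le)).mono
    Ioo_subset_Ioc_self Ioo_subset_Ioc_self <;> exact_mod_cast hlt

lemma exists_gridBox_pos_near {μ : Measure ℝ} {F : Set ℝ} (hsupp : HasSupport μ F) {x : ℝ}
    (hx : x ∈ F) {η R : ℝ} (hη : 0 < η) (hR : 0 < R) :
    ∃ m : ℤ, 0 < μ (gridBox R m) ∧ ∃ y ∈ gridBox R m, |y - x| < η := by
  have hcover : Ioo (x - η) (x + η) ⊆ ⋃ m : ℤ, gridBox R m ∩ Ioo (x - η) (x + η) :=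
    fun y hy => mem_iUnion.mpr ⟨_, mem_gridBox_floor hR y, hy⟩
  obtain ⟨m, hm⟩ : ∃ m : ℤ, μ (gridBox R m ∩ Ioo (x - η) (x + η)) ≠ 0 := by
    by_contra! h
    exact (hsupp.2 x hx η hη).ne' (measure_mono_null hcover (measure_iUnion_null h))
  obtain ⟨y, hy, hyx⟩ := nonempty_of_measure_ne_zero hm
  exact ⟨m, (pos_iff_ne_zero.mpr hm).trans_le (measure_mono inter_subset_left), y, hy,
    abs_sub_lt_iff.mpr ⟨by linarith [hyx.2], by linarith [hyx.1]⟩⟩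

lemma FractalComplement.card_le_of_gridBox_near {F : Set ℝ} (c : FractalComplement F)
    {R κ : ℝ} (hR : 0 < R) (hκ : 0 ≤ κ) {n : ℕ} {t : Finset ℤ}
    (ht : ∀ m ∈ t, ∃ x ∈ gridBox R m, x - κ * R ≤ c.l n ∧ c.r n ≤ x + κ * R) :
    (t.card : ℝ) ≤ 2 * (κ + 1) := by
  refine le_of_mul_le_mul_right ?_ hR
  refine (card_mul_le_of_gridBox_subset (A := c.l n - (κ + 1) * R) (B := c.l n + (κ + 1) * R)
    hR (by nlinarith) fun m hm => ?_).trans_eq (by ring)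
  obtain ⟨x, ⟨hx₁, hx₂⟩, hl, hr⟩ := ht m hm
  have := c.lt n
  exact Icc_subset_Icc (by linarith) (by linarith)

lemma FractalComplement.card_le_of_near_gridBox {F : Set ℝ} (c : FractalComplement F)
    {d R : ℝ} (hd : 0 < d) (hR : 0 < R) {m : ℤ} {t : Finset ℕ}
    (ht : ∀ n ∈ t, R / (2 * d) ≤ c.len n ∧ c.len n ≤ R / d ∧
      ∃ y ∈ gridBox R m, |y - c.l n| < c.len n) :
    (t.card : ℝ) ≤ 2 * d + 6 := by
  have hRd : 0 < R / (2 * d) := by positivity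
  refine le_of_mul_le_mul_right ?_ hRd
  refine (card_mul_le_of_pairwiseDisjoint_Ioo (fun i _ j _ hij => c.disj hij) hRd.le
    (fun n hn => (ht n hn).1) (A := m * R - R / d) (B := (m + 1) * R + 2 * (R / d))
    (fun n hn => ?_) (by linarith [div_pos hR hd])).trans_eq (by field_simp; ring)
  obtain ⟨-, hlen, y, ⟨hy₁, hy₂⟩, hyl⟩ := ht n hn
  have := abs_sub_lt_iff.mp hyl
  have := c.l_add_len n
  exact Ioo_subset_Icc_self.trans (Icc_subset_Icc (by linarith) (by linarith))

section PosBoxes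

variable {μ : Measure ℝ} {R : ℝ}

/-- `B_R^*` as a finset: for `μ` living on `[0,1]`, only indices in `[-1, ⌊1/R⌋]` can occur
(`mem_posBoxes`). -/
def posBoxes (μ : Measure ℝ) (R : ℝ) : Finset ℤ :=
  {m ∈ Finset.Icc (-1) ⌊1 / R⌋ | 0 < μ (gridBox R m)}

lemma mem_posBoxes (hμ : μ (Icc 0 1)ᶜ = 0) (hR : 0 < R) {m : ℤ} :
    m ∈ posBoxes μ R ↔ 0 < μ (gridBox R m) := by
  refine ⟨fun hm => (Finset.mem_filter.mp hm).2, fun hm => Finset.mem_filter.mpr ⟨?_, hm⟩⟩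
  obtain ⟨x, ⟨hx₁, hx₂⟩, hx0, hx1⟩ := nonempty_inter_of_measure_compl_eq_zero hμ hm
  have h₁ : (-1 : ℝ) ≤ m := by nlinarith
  have h₂ : (m : ℝ) ≤ 1 / R := by rw [le_div_iff₀ hR]; linarith
  exact Finset.mem_Icc.mpr ⟨by exact_mod_cast h₁, Int.le_floor.mpr h₂⟩

lemma card_posBoxes_le (hR : 0 < R) : ((posBoxes μ R).card : ℝ) ≤ 1 / R + 2 := by
  have hcard := Finset.card_filter_le (Finset.Icc (-1 : ℤ) ⌊1 / R⌋) fun m => 0 < μ (gridBox R m)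
  rw [Int.card_Icc] at hcard
  have h0 : (0 : ℤ) ≤ ⌊1 / R⌋ + 1 - -1 := by
    have := Int.floor_nonneg.mpr (by positivity : (0 : ℝ) ≤ 1 / R); omega
  calc ((posBoxes μ R).card : ℝ) ≤ ((⌊1 / R⌋ + 1 - -1).toNat : ℤ) := by exact_mod_cast hcard
    _ = (⌊1 / R⌋ : ℝ) + 2 := by rw [Int.toNat_of_nonneg h0]; push_cast; ring
    _ ≤ 1 / R + 2 := by linarith [Int.floor_le (1 / R)]

lemma gridSum_eq_sum_posBoxes (hμ : μ (Icc 0 1)ᶜ = 0) (hR : 0 < R) (a q : ℝ) :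
    gridSum μ a q R =
      ∑ m ∈ posBoxes μ R, (μ (enlarge a (m * R) ((m + 1) * R))).toReal ^ q := by
  refine (tsum_eq_sum fun m hm => ?_).trans
    (Finset.sum_congr rfl fun m hm => if_pos ((mem_posBoxes hμ hR).mp hm))
  exact if_neg ((mem_posBoxes hμ hR).not.mp hm)

lemma sum_le_gridSum (hμ : μ (Icc 0 1)ᶜ = 0) (hR : 0 < R) (a q : ℝ) {t : Finset ℤ}
    (ht : ∀ m ∈ t, 0 < μ (gridBox R m)) :
    ∑ m ∈ t, (μ (enlarge a (m * R) ((m + 1) * R))).toReal ^ q ≤ gridSum μ a q R := by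
  rw [gridSum_eq_sum_posBoxes hμ hR]
  exact Finset.sum_le_sum_of_subset_of_nonneg (fun m hm => (mem_posBoxes hμ hR).mpr (ht m hm))
    fun _ _ _ => Real.rpow_nonneg ENNReal.toReal_nonneg q

lemma exists_gridBox_measure_ge (hμ : μ (Icc 0 1)ᶜ = 0) [IsProbabilityMeasure μ] (hR : 0 < R)
    (hR2 : R ≤ 1 / 2) : ∃ m ∈ posBoxes μ R, R / 2 ≤ (μ (gridBox R m)).toReal := by
  have hcover : (1 : ℝ) ≤ ∑ m ∈ posBoxes μ R, (μ (gridBox R m)).toReal := by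
    have h := measure_iUnion_le (μ := μ) (gridBox R)
    rw [iUnion_eq_univ_iff.mpr fun y => ⟨_, mem_gridBox_floor hR y⟩, measure_univ,
      tsum_eq_sum fun m hm => not_lt.mp ((mem_posBoxes hμ hR).not.mp hm) |>.antisymm bot_le]
      at h
    rw [← ENNReal.toReal_sum fun m _ => measure_ne_top μ _]
    exact ENNReal.toReal_one ▸ ENNReal.toReal_mono (by simp [measure_ne_top]) h
  have hne : (posBoxes μ R).Nonempty :=
    Finset.nonempty_iff_ne_empty.mpr fun h => by rw [h, Finset.sum_empty] at hcover; linarith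
  refine Finset.exists_le_of_sum_le hne (hcover.trans' ?_)
  have hcard := card_posBoxes_le (μ := μ) hR
  have : (1 / R + 2) * (R / 2) ≤ 1 := by
    rw [add_mul, one_div_mul_eq_div, div_div_cancel_left' hR.ne']; linarith
  rw [Finset.sum_const, nsmul_eq_mul]
  exact (mul_le_mul_of_nonneg_right hcard (by positivity)).trans this

end PosBoxes

lemma bddBelow_setOf_tendsto_gridSum {μ : Measure ℝ} [IsProbabilityMeasure μ]
    (hμ : μ (Icc 0 1)ᶜ = 0) {a : ℝ} (ha : 0 ≤ a) (q : ℝ) :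
    BddBelow {β : ℝ | Tendsto (fun R => R ^ β * gridSum μ a q R) (𝓝[>] 0) (𝓝 0)} := by
  refine ⟨min (-q) 0, fun β hβ => not_lt.mp fun hβq => ?_⟩
  set p := max q 0
  have hβp : β + p < 0 := by
    obtain ⟨h₁, h₂⟩ := lt_min_iff.mp hβq
    rw [add_max, add_zero]; exact max_lt (by linarith) h₂
  -- some grid box has mass `≥ R/2`, so `gridSum μ a q R ≥ (R/2)^p`
  have hlow : ∀ᶠ R in 𝓝[>] 0, 1 / 2 ^ p ≤ R ^ β * gridSum μ a q R := by
    filter_upwards [Ioo_mem_nhdsGT (by norm_num : (0 : ℝ) < 1 / 2)] with R ⟨hR, hR2⟩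
    obtain ⟨m, hm, hmR⟩ := exists_gridBox_measure_ge hμ hR hR2.le
    set x := (μ (enlarge a (m * R) ((m + 1) * R))).toReal
    have hx : R / 2 ≤ x := hmR.trans (measureReal_mono (gridBox_subset_enlarge ha hR.le m))
    have hxq : (R / 2) ^ p ≤ x ^ q := by
      rcases le_total 0 q with hq | hq
      · rw [show p = q from max_eq_left hq]; exact Real.rpow_le_rpow (by positivity) hx hq
      · rw [show p = 0 from max_eq_right hq, Real.rpow_zero]
        exact Real.one_le_rpow_of_pos_of_le_one_of_nonpos (by linarith) measureReal_le_one hq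
    have hsum : x ^ q ≤ gridSum μ a q R := by
      simpa using sum_le_gridSum hμ hR a q (t := {m}) (by simpa using (mem_posBoxes hμ hR).mp hm)
    calc 1 / 2 ^ p ≤ R ^ (β + p) / 2 ^ p := by
          gcongr; exact Real.one_le_rpow_of_pos_of_le_one_of_nonpos hR (by linarith) hβp.le
      _ = R ^ β * (R / 2) ^ p := by
          rw [Real.rpow_add hR, Real.div_rpow hR.le zero_le_two]; ring
      _ ≤ R ^ β * gridSum μ a q R := by gcongr; exact hxq.trans hsum
  exact (ge_of_tendsto hβ hlow).not_gt (by positivity)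

lemma Lacunary.exists_interval_near_gridBox {F : Set ℝ} {c : FractalComplement F} {lam : ℝ}
    (hlac : Lacunary c lam) {μ : Measure ℝ} (hμF : μ Fᶜ = 0) {R ρ : ℝ} (hρ : 0 < ρ)
    (hρ1 : ρ ≤ 1) {m : ℤ} (hm : 0 < μ (gridBox R m)) :
    ∃ n, ∃ x ∈ gridBox R m, x - ρ ≤ c.l n ∧ c.r n ≤ x + ρ ∧ lam * ρ ≤ c.len n := by
  obtain ⟨x, hx, hxF⟩ := nonempty_inter_of_measure_compl_eq_zero hμF hm
  obtain ⟨n, hsub, hlen⟩ := hlac x hxF ρ hρ hρ1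
  have hlr := le_and_le_of_Ioo_subset_Icc (c.lt n) hsub
  exact ⟨n, x, hx, hlr.1, hlr.2, hlen⟩

lemma pos_of_two_div_le {lam a : ℝ} (hlam : 0 < lam) (ha : 2 / lam ≤ a) : 0 < a :=
  (div_pos two_pos hlam).trans_le ha

lemma exists_const_measure_enlarge_gridBox_le {F : Set ℝ} (c : FractalComplement F)
    {μ : Measure ℝ} [IsFiniteMeasure μ] (hsupp : HasSupport μ F) {lam a : ℝ} (hlam : 0 < lam)
    (ha : 2 / lam ≤ a) (q : ℝ) :
    ∃ κ > 0, ∀ (R : ℝ) (m : ℤ), ∀ x ∈ gridBox R m, ∀ n, x - κ * R ≤ c.l n →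
      c.r n ≤ x + κ * R → lam * (κ * R) ≤ c.len n →
      (μ (enlarge a (m * R) ((m + 1) * R))).toReal ^ q ≤ (μ (c.I a n)).toReal ^ q := by
  have halam : 2 ≤ a * lam := (div_le_iff₀ hlam).mp ha
  have ha0 := pos_of_two_div_le hlam ha
  rcases le_total 0 q with hq | hq
  · -- `(1 + a/2) λ κ = κ + (1 + a/2)`: then `Ī_n^a` swallows the enlarged box
    have hden : 0 < (1 + a / 2) * lam - 1 := by nlinarith
    set κ := (1 + a / 2) / ((1 + a / 2) * lam - 1)
    have hκ : κ * ((1 + a / 2) * lam - 1) = 1 + a / 2 := div_mul_cancel₀ _ hden.ne'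
    refine ⟨κ, by positivity, fun R m x ⟨hx₁, hx₂⟩ n hl hr hlen =>
      measure_toReal_rpow_le_of_subset hq ?_⟩
    have := mul_le_mul_of_nonneg_left hlen (by positivity : (0 : ℝ) ≤ 1 + a / 2)
    have := congrArg (· * R) hκ
    have := c.l_add_len n
    rw [enlarge_gridBox, c.I_eq]
    exact Icc_subset_Icc (by linarith) (by linarith)
  · -- `(1 + a) κ = a/2`: then the enlarged box swallows `Ī_n^a`
    set κ := a / (2 * (1 + a))
    have hκ : κ * (2 * (1 + a)) = a := div_mul_cancel₀ _ (by positivity)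
    refine ⟨κ, by positivity, fun R m x ⟨hx₁, hx₂⟩ n hl hr _ =>
      measure_toReal_rpow_le_of_superset hq ?_ (c.measure_I_pos hsupp ha0 n)⟩
    have := mul_le_mul_of_nonneg_left (by linarith [c.l_add_len n] : c.len n ≤ 2 * (κ * R)) ha0.le
    have := congrArg (· * R) hκ
    rw [enlarge_gridBox, c.I_eq]
    exact Icc_subset_Icc (by linarith) (by linarith)

lemma gridSum_le_mul_rpow_neg_of_summable {F : Set ℝ} (hF : F ⊆ Icc 0 1)
    (c : FractalComplement F) {lam : ℝ} (hlam : 0 < lam) (hlac : Lacunary c lam)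
    {μ : Measure ℝ} [IsFiniteMeasure μ] (hsupp : HasSupport μ F) {a q β : ℝ} (ha : 2 / lam ≤ a)
    (hβ : Summable fun n => (μ (c.I a n)).toReal ^ q * c.len n ^ β) :
    ∃ C, ∀ᶠ R in 𝓝[>] 0, 0 ≤ gridSum μ a q R ∧ gridSum μ a q R ≤ C * R ^ (-β) := by
  obtain ⟨κ, hκ, hcmp⟩ := exists_const_measure_enlarge_gridBox_le c hsupp hlam ha q
  set term := fun n => (μ (c.I a n)).toReal ^ q * c.len n ^ β
  have hterm : ∀ n, 0 ≤ term n := fun n =>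
    mul_nonneg (Real.rpow_nonneg ENNReal.toReal_nonneg q) (Real.rpow_nonneg (c.len_pos n).le β)
  set D := (lam * κ) ^ (-β) + (2 * κ) ^ (-β)
  refine ⟨2 * (κ + 1) * D * ∑' n, term n, ?_⟩
  filter_upwards [Ioo_mem_nhdsGT (by positivity : 0 < 1 / κ)] with R ⟨hR, hRκ⟩
  have hμ := hsupp.measure_compl_Icc hF
  have hsel : ∀ m ∈ posBoxes μ R, ∃ n, ∃ x ∈ gridBox R m,
      x - κ * R ≤ c.l n ∧ c.r n ≤ x + κ * R ∧ lam * (κ * R) ≤ c.len n :=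
    fun m hm => hlac.exists_interval_near_gridBox hsupp.1 (by positivity)
      ((lt_div_iff₀' hκ).mp hRκ).le ((mem_posBoxes hμ hR).mp hm)
  choose! φ ξ hξ hl hr hlen using hsel
  refine ⟨by rw [gridSum_eq_sum_posBoxes hμ hR]; positivity, ?_⟩
  have hpoint : ∀ m ∈ posBoxes μ R, (μ (enlarge a (m * R) ((m + 1) * R))).toReal ^ q ≤
      D * R ^ (-β) * term (φ m) := fun m hm => by
    have hlen_pos := c.len_pos (φ m)
    have hlen_le : c.len (φ m) ≤ 2 * κ * R := by
      linarith [hl m hm, hr m hm, c.l_add_len (φ m)]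
    calc _ ≤ (μ (c.I a (φ m))).toReal ^ q := hcmp R m _ (hξ m hm) _ (hl m hm) (hr m hm) (hlen m hm)
      _ = term (φ m) * c.len (φ m) ^ (-β) := by
          rw [mul_assoc, ← Real.rpow_add hlen_pos, add_neg_cancel, Real.rpow_zero, mul_one]
      _ ≤ term (φ m) * (D * R ^ (-β)) := by
          gcongr
          exact rpow_le_add_mul_rpow hR (by positivity) (by linarith [hlen m hm]) hlen_le
      _ = _ := mul_comm _ _
  have hfiber : ∀ n ∈ (posBoxes μ R).image φ,
      (((posBoxes μ R).filter (φ · = n)).card : ℝ) ≤ 2 * (κ + 1) := fun n _ =>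
    c.card_le_of_gridBox_near (n := n) hR hκ.le fun m hm => by
      obtain ⟨hm', rfl⟩ := Finset.mem_filter.mp hm
      exact ⟨_, hξ m hm', hl m hm', hr m hm'⟩
  rw [gridSum_eq_sum_posBoxes hμ hR]
  calc _ ≤ 2 * (κ + 1) * ∑ n ∈ (posBoxes μ R).image φ, D * R ^ (-β) * term n :=
        sum_le_mul_sum_image_of_card_fiber_le (fun n _ => mul_nonneg (by positivity) (hterm n))
          hpoint hfiber
    _ ≤ 2 * (κ + 1) * (D * R ^ (-β) * ∑' n, term n) := by
        rw [← Finset.mul_sum]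
        gcongr
        exact hβ.sum_le_tsum _ fun n _ => hterm n
    _ = _ := by ring

lemma tendsto_gridSum_of_summable {F : Set ℝ} (hF : F ⊆ Icc 0 1)
    (c : FractalComplement F) {lam : ℝ} (hlam : 0 < lam) (hlac : Lacunary c lam)
    {μ : Measure ℝ} [IsFiniteMeasure μ] (hsupp : HasSupport μ F) {a q β ε : ℝ} (ha : 2 / lam ≤ a)
    (hβ : Summable fun n => (μ (c.I a n)).toReal ^ q * c.len n ^ β) (hε : 0 < ε) :
    Tendsto (fun R => R ^ (β + ε) * gridSum μ a q R) (𝓝[>] 0) (𝓝 0) :=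
  have ⟨_, hC⟩ := gridSum_le_mul_rpow_neg_of_summable hF c hlam hlac hsupp ha hβ
  tendsto_rpow_add_mul_of_le_mul_rpow_neg hε hC

lemma exists_const_measure_I_le_enlarge_gridBox {F : Set ℝ} (c : FractalComplement F)
    {μ : Measure ℝ} [IsFiniteMeasure μ] {a : ℝ} (ha : 0 < a) (q : ℝ) :
    ∃ d > 0, ∀ n (R : ℝ) (m : ℤ), d * c.len n ≤ R → R ≤ 2 * d * c.len n →
      0 < μ (gridBox R m) → ∀ y ∈ gridBox R m, |y - c.l n| < min R (c.len n) →
      (μ (c.I a n)).toReal ^ q ≤ (μ (enlarge a (m * R) ((m + 1) * R))).toReal ^ q := by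
  rcases le_total 0 q with hq | hq
  · -- `R ≥ (1 + 4/a) |I_n|`: then the enlarged box swallows `Ī_n^a`
    set d := (a + 4) / a
    have hd : d * a = a + 4 := div_mul_cancel₀ _ ha.ne'
    refine ⟨d, by positivity, fun n R m hRl _ _ y ⟨hy₁, hy₂⟩ hyl =>
      measure_toReal_rpow_le_of_subset hq ?_⟩
    obtain ⟨hyl₁, hyl₂⟩ := abs_sub_lt_iff.mp (hyl.trans_le (min_le_right _ _))
    have := mul_le_mul_of_nonneg_left hRl ha.le
    have := congrArg (· * c.len n) hd
    have := c.l_add_len n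
    rw [enlarge_gridBox, c.I_eq]
    exact Icc_subset_Icc (by linarith) (by linarith)
  · -- `(4 + a) R ≤ a |I_n|`: then `Ī_n^a` swallows the enlarged box
    set d := a / (2 * (4 + a))
    have hd0 : 0 < d := by positivity
    have hd : d * (2 * (4 + a)) = a := div_mul_cancel₀ _ (by positivity)
    refine ⟨d, hd0, fun n R m hRl hRu hm y ⟨hy₁, hy₂⟩ hyl =>
      measure_toReal_rpow_le_of_superset hq ?_ (hm.trans_le (measure_mono
        (gridBox_subset_enlarge ha.le ((mul_pos hd0 (c.len_pos n)).le.trans hRl) m)))⟩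
    obtain ⟨hyl₁, hyl₂⟩ := abs_sub_lt_iff.mp (hyl.trans_le (min_le_left _ _))
    have := mul_le_mul_of_nonneg_left hRu (by positivity : (0 : ℝ) ≤ 2 * (4 + a))
    have := congrArg (· * c.len n) hd
    have := c.l_add_len n
    have := c.len_pos n
    rw [enlarge_gridBox, c.I_eq]
    exact Icc_subset_Icc (by linarith) (by linarith)

lemma FractalComplement.sum_le_mul_rpow_mul_gridSum {F : Set ℝ} (c : FractalComplement F)
    {μ : Measure ℝ} (hμ : μ (Icc 0 1)ᶜ = 0) {a q d R γ : ℝ} (hd : 0 < d) (hR : 0 < R)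
    {t : Finset ℕ} (mf : ℕ → ℤ)
    (hbox : ∀ n ∈ t, 0 < μ (gridBox R (mf n)) ∧ d * c.len n ≤ R ∧ R ≤ 2 * d * c.len n ∧
      ∃ y ∈ gridBox R (mf n), |y - c.l n| < c.len n)
    (hcmp : ∀ n ∈ t, (μ (c.I a n)).toReal ^ q ≤
      (μ (enlarge a (mf n * R) ((mf n + 1) * R))).toReal ^ q) :
    ∑ n ∈ t, (μ (c.I a n)).toReal ^ q * c.len n ^ γ ≤
      (2 * d + 6) * ((1 / (2 * d)) ^ γ + (1 / d) ^ γ) * R ^ γ * gridSum μ a q R := by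
  set D := (1 / (2 * d)) ^ γ + (1 / d) ^ γ
  have hlen : ∀ n ∈ t, R / (2 * d) ≤ c.len n ∧ c.len n ≤ R / d := fun n hn => by
    obtain ⟨-, h₁, h₂, -⟩ := hbox n hn
    exact ⟨by rw [div_le_iff₀ (by positivity)]; linarith, by rw [le_div_iff₀ hd]; linarith⟩
  have hpoint : ∀ n ∈ t, (μ (c.I a n)).toReal ^ q * c.len n ^ γ ≤
      D * R ^ γ * (μ (enlarge a (mf n * R) ((mf n + 1) * R))).toReal ^ q := fun n hn => by
    rw [mul_comm (D * R ^ γ)]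
    refine mul_le_mul (hcmp n hn) (rpow_le_add_mul_rpow hR (by positivity) ?_ ?_)
      (Real.rpow_nonneg (c.len_pos n).le γ) (Real.rpow_nonneg ENNReal.toReal_nonneg q)
    · simpa [div_eq_inv_mul, mul_comm] using (hlen n hn).1
    · simpa [div_eq_inv_mul, mul_comm] using (hlen n hn).2
  have hfiber : ∀ m ∈ t.image mf, ((t.filter (mf · = m)).card : ℝ) ≤ 2 * d + 6 := fun m _ =>
    c.card_le_of_near_gridBox (m := m) hd hR fun n hn => by
      obtain ⟨hn', rfl⟩ := Finset.mem_filter.mp hn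
      obtain ⟨-, -, -, hy⟩ := hbox n hn'
      exact ⟨(hlen n hn').1, (hlen n hn').2, hy⟩
  calc _ ≤ (2 * d + 6) * ∑ m ∈ t.image mf, D * R ^ γ *
        (μ (enlarge a (m * R) ((m + 1) * R))).toReal ^ q :=
        sum_le_mul_sum_image_of_card_fiber_le (fun m _ => by positivity) hpoint hfiber
    _ ≤ (2 * d + 6) * (D * R ^ γ * gridSum μ a q R) := by
        rw [← Finset.mul_sum]
        gcongr
        refine sum_le_gridSum hμ hR a q fun m hm => ?_
        obtain ⟨n, hn, rfl⟩ := Finset.mem_image.mp hm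
        exact (hbox n hn).1
    _ = _ := by ring

lemma FractalComplement.exists_dyadic_gridBox_near {F : Set ℝ} (c : FractalComplement F)
    {μ : Measure ℝ} (hsupp : HasSupport μ F) {d : ℝ} (hd : 0 < d) {n : ℕ}
    (hn : d * c.len n ≤ 1) :
    ∃ k : ℕ, ∃ m : ℤ, 0 < μ (gridBox ((1 / 2) ^ k) m) ∧
      d * c.len n ≤ (1 / 2) ^ k ∧ (1 / 2) ^ k ≤ 2 * d * c.len n ∧
      ∃ y ∈ gridBox ((1 / 2) ^ k) m, |y - c.l n| < min ((1 / 2) ^ k) (c.len n) := by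
  obtain ⟨k, hk₁, hk₂⟩ := exists_half_pow_mem_Icc (mul_pos hd (c.len_pos n)) hn
  obtain ⟨m, hm, hy⟩ := exists_gridBox_pos_near hsupp (c.l_mem n)
    (η := min ((1 / 2) ^ k) (c.len n)) (lt_min (by positivity) (c.len_pos n))
    (by positivity : (0 : ℝ) < (1 / 2) ^ k)
  exact ⟨k, m, hm, hk₁, by linarith, hy⟩

lemma summable_of_tendsto_gridSum {F : Set ℝ} (hF : F ⊆ Icc 0 1) (c : FractalComplement F)
    {μ : Measure ℝ} [IsFiniteMeasure μ] (hsupp : HasSupport μ F) {a q β ε : ℝ} (ha : 0 < a)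
    (hβ : Tendsto (fun R => R ^ β * gridSum μ a q R) (𝓝[>] 0) (𝓝 0)) (hε : 0 < ε) :
    Summable fun n => (μ (c.I a n)).toReal ^ q * c.len n ^ (β + ε) := by
  set f := fun n => (μ (c.I a n)).toReal ^ q * c.len n ^ (β + ε)
  have hf : ∀ n, 0 ≤ f n := fun n =>
    mul_nonneg (Real.rpow_nonneg ENNReal.toReal_nonneg q) (Real.rpow_nonneg (c.len_pos n).le _)
  obtain ⟨d, hd, hcmp⟩ := exists_const_measure_I_le_enlarge_gridBox c (μ := μ) ha q
  obtain ⟨r₀, hr₀, hbound⟩ := mem_nhdsGT_iff_exists_Ioo_subset.mp (hβ.eventually_le_const one_pos)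
  obtain ⟨N, hN⟩ := eventually_atTop.mp <|
    (c.tendsto_len_atTop.const_mul (2 * d)).eventually_lt_const (by
      rw [mul_zero]; exact lt_min one_pos hr₀ : 2 * d * 0 < min 1 r₀)
  choose! kf mf hpos hk₁ hk₂ hy using fun n (hn : N ≤ n) =>
    c.exists_dyadic_gridBox_near hsupp hd (by linarith [(lt_min_iff.mp (hN n hn)).1])
  set C := (2 * d + 6) * ((1 / (2 * d)) ^ (β + ε) + (1 / d) ^ (β + ε))
  have hC : 0 ≤ C := by positivity
  have hgeo : Summable fun k : ℕ => C * ((1 / 2 : ℝ) ^ ε) ^ k :=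
    (summable_geometric_of_lt_one (by positivity)
      (Real.rpow_lt_one (by norm_num) (by norm_num) hε)).mul_left C
  -- the short intervals attached to scale `k` contribute at most `C (2^{-ε})^k`
  refine summable_of_sum_fiber_le hf (N := N) kf hgeo fun u k hu => ?_
  rcases u.eq_empty_or_nonempty with rfl | ⟨n₀, hn₀⟩
  · simp only [Finset.sum_empty]; positivity
  set R : ℝ := (1 / 2) ^ k
  have hR : 0 < R := by positivity
  have hRr₀ : R < r₀ := by
    obtain ⟨hN₀, rfl⟩ := hu n₀ hn₀
    linarith [hk₂ n₀ hN₀, (lt_min_iff.mp (hN n₀ hN₀)).2]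
  calc ∑ n ∈ u, f n ≤ C * R ^ (β + ε) * gridSum μ a q R := by
        refine c.sum_le_mul_rpow_mul_gridSum (hsupp.measure_compl_Icc hF) hd hR mf
          (fun n hn => ?_) fun n hn => ?_ <;> obtain ⟨hNn, rfl⟩ := hu n hn
        · obtain ⟨y, hy, hyl⟩ := hy n hNn
          exact ⟨hpos n hNn, hk₁ n hNn, hk₂ n hNn, y, hy, hyl.trans_le (min_le_right _ _)⟩
        · obtain ⟨y, hy, hyl⟩ := hy n hNn
          exact hcmp n _ _ (hk₁ n hNn) (hk₂ n hNn) (hpos n hNn) y hy hyl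
    _ = C * R ^ ε * (R ^ β * gridSum μ a q R) := by rw [Real.rpow_add hR]; ring
    _ ≤ C * R ^ ε * 1 := by gcongr; exact hbound ⟨hR, hRr₀⟩
    _ = C * ((1 / 2 : ℝ) ^ ε) ^ k := by
        rw [mul_one, ← Real.rpow_mul_natCast (by norm_num), mul_comm ε,
          Real.rpow_natCast_mul (by norm_num)]

theorem stmt_11_general (F : Set ℝ) (hF : IsFractalSubset F) (c : FractalComplement F)
    (lam : ℝ) (hlam0 : 0 < lam) (hlac : Lacunary c lam)
    (μ : Measure ℝ) [IsProbabilityMeasure μ] (hsupp : HasSupport μ F)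
    (q a : ℝ) (ha : 2 / lam ≤ a) :
    betaA μ a q =
      sInf {β : ℝ | Summable (fun n : ℕ => (μ (c.I a n)).toReal ^ q * c.len n ^ β)} := by
  have ha0 := pos_of_two_div_le hlam0 ha
  exact sInf_eq_sInf_of_forall_add_mem
    (bddBelow_setOf_tendsto_gridSum (hsupp.measure_compl_Icc hF.2.1) ha0.le q)
    (fun β hβ ε hε => summable_of_tendsto_gridSum hF.2.1 c hsupp ha0 hβ hε)
    (fun β hβ ε hε => tendsto_gridSum_of_summable hF.2.1 c hlam0 hlac hsupp ha hβ hε)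

/-- the moment function `β(q)` equals the abscissa of convergence of the
series `Σ_n μ(Ī_n^a)^q |I_n|^β` (equation (beta1) of Proposition 4.4). -/
theorem stmt_11 (F : Set ℝ) (hF : IsFractalSubset F) (c : FractalComplement F)
    (lam : ℝ) (hlam0 : 0 < lam) (hlam1 : lam ≤ 1) (hlac : Lacunary c lam)
    (μ : Measure ℝ) [IsProbabilityMeasure μ] [NullSingletonClass μ] (hsupp : HasSupport μ F)
    (q a : ℝ) (ha : 2 / lam ≤ a) :
    betaA μ a q =
      sInf {β : ℝ | Summable (fun n : ℕ => (μ (c.I a n)).toReal ^ q * c.len n ^ β)} :=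
  stmt_11_general F hF c lam hlam0 hlac μ hsupp q a ha
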